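/- Let Π be an LP^MLN program over a finite set of atoms and let τ₂(Π) be the plingo program with hard formulas {α : F ∨ ¬F : (w : F) ∈ Π}, soft integrity constraints {w : ¬¬F : (w : F) ∈ soft(Π)}, and weak constraints {:~ F [−1, 1] : (α : F) ∈ hard(Π)}. Then OSM(τ₂(Π)) = {X ∈ SSM(Π) : |hard(Π)_X| ≥ |hard(Π)_Y| for every Y ∈ SSM(Π)}; that is, the hard formulas of τ₂(Π) generate exactly the soft stable models of Π, and its weak constraints select those satisfying a maximal number of hard formulas of Π. -/

import Mathlib

open Filter

attribute [local instance] Classical.propDecidable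

/-- Propositional formulas over atoms `At`, built from atoms and `⊥`
    using `∧`, `∨`, `→`. -/
inductive Formula (At : Type) where
  | bot  : Formula At
  | atom : At → Formula At
  | and  : Formula At → Formula At → Formula At
  | or   : Formula At → Formula At → Formula At
  | imp  : Formula At → Formula At → Formula At

namespace Formula

variable {At : Type}

/-- `¬F` abbreviates `F → ⊥`. -/
def neg (F : Formula At) : Formula At := imp F bot

/-- Classical satisfaction of a formula by an interpretation `X ⊆ At`. -/
def sat (X : Finset At) : Formula At → Prop
  | bot => False
  | atom a => a ∈ X
  | and F G => sat X F ∧ sat X G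
  | or F G => sat X F ∨ sat X G
  | imp F G => sat X F → sat X G

/-- The reduct `F^X`: every maximal subformula not satisfied by `X` is
    replaced by `⊥`. -/
noncomputable def reduct (X : Finset At) : Formula At → Formula At
  | bot => bot
  | atom a => if sat X (atom a) then atom a else bot
  | and F G => if sat X (and F G) then and (reduct X F) (reduct X G) else bot
  | or F G => if sat X (or F G) then or (reduct X F) (reduct X G) else bot
  | imp F G => if sat X (imp F G) then imp (reduct X F) (reduct X G) else bot

end Formula

variable {At : Type}

/-- `X` satisfies every formula in `Γ`. -/
def SatAll (X : Finset At) (Γ : Set (Formula At)) : Prop := ∀ F ∈ Γ, F.sat X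

/-- `X` is a stable model of `Γ` (Ferraris semantics): `X` satisfies `Γ` and no
    proper subset of `X` satisfies the reduct `Γ^X`. -/
def IsStable (X : Finset At) (Γ : Set (Formula At)) : Prop :=
  SatAll X Γ ∧ ∀ Y : Finset At, Y ⊂ X → ¬ SatAll Y (Formula.reduct X '' Γ)

/-- Weak constraint `:~ F [w, l]`. -/
structure WeakConstraint (At : Type) where
  formula : Formula At
  weight : ℝ
  level : ℕ

/-- `Cost_Ω(X, l)`: sum of the weights `w` over all `:~ F [w, l]` in `Ω` at level `l`
    whose formula is satisfied by `X`. -/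
noncomputable def Cost (Ω : Finset (WeakConstraint At)) (X : Finset At) (l : ℕ) : ℝ :=
  ∑ c ∈ Ω.filter (fun c => c.level = l ∧ c.formula.sat X), c.weight

/-- `X` is an optimal stable model of `Γ ∪ Ω`. -/
def OptStable (Γ : Set (Formula At)) (Ω : Finset (WeakConstraint At)) (X : Finset At) : Prop :=
  IsStable X Γ ∧
    ¬ ∃ Y : Finset At, IsStable Y Γ ∧ ∃ l : ℕ,
        Cost Ω Y l < Cost Ω X l ∧ ∀ l' : ℕ, l < l' → Cost Ω Y l' = Cost Ω X l'

/-- A weight is either the symbolic infinite weight `α` or a real number. -/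
inductive Weight where
  | alpha : Weight
  | soft : ℝ → Weight

/-- The real value of a weight when the real number `a` is substituted for `α`. -/
def Weight.val (a : ℝ) : Weight → ℝ
  | .alpha => a
  | .soft w => w

/-- A weighted formula `w : F`. -/
structure WFormula (At : Type) where
  weight : Weight
  formula : Formula At

/-- A hard formula `α : F`. -/
def WFormula.isHard (p : WFormula At) : Prop := p.weight = Weight.alpha

/-- A soft formula `w : F` with `w` a real number. -/
def WFormula.isSoft (p : WFormula At) : Prop := ∃ w : ℝ, p.weight = Weight.soft w

/-- `hard(Π)`. -/
noncomputable def hardPart (P : Finset (WFormula At)) : Finset (WFormula At) :=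
  P.filter (fun p => p.isHard)

/-- `soft(Π)`. -/
noncomputable def softPart (P : Finset (WFormula At)) : Finset (WFormula At) :=
  P.filter (fun p => p.isSoft)

/-- `Π_X`: the weighted formulas of `Π` whose formula is satisfied by `X`. -/
noncomputable def satPart (P : Finset (WFormula At)) (X : Finset At) : Finset (WFormula At) :=
  P.filter (fun p => p.formula.sat X)

/-- `SSM(Π)`: the soft stable models of the LP^MLN program `Π`. -/
def SSM (P : Finset (WFormula At)) : Set (Finset At) :=
  { X | IsStable X (WFormula.formula '' (↑(satPart P X) : Set (WFormula At))) }

/-- `W_Π(X, a)`. -/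
noncomputable def Wgt (P : Finset (WFormula At)) (X : Finset At) (a : ℝ) : ℝ :=
  if X ∈ SSM P then Real.exp (∑ p ∈ satPart P X, p.weight.val a) else 0

/-- The quotient whose limit as `a → ∞` defines `P_Π(X)`. -/
noncomputable def ratio [Fintype At] (P : Finset (WFormula At)) (X : Finset At) (a : ℝ) : ℝ :=
  Wgt P X a / ∑ Y ∈ Finset.univ.filter (fun Y => Y ∈ SSM P), Wgt P Y a

/-- `SSM'(Π)`: soft stable models satisfying all hard formulas. -/
def SSM' (P : Finset (WFormula At)) : Set (Finset At) :=
  { X | X ∈ SSM P ∧ ∀ p ∈ P, p.isHard → p.formula.sat X }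

/-- `W'_Π(X)` (alternative semantics). -/
noncomputable def Wgt' (P : Finset (WFormula At)) (X : Finset At) : ℝ :=
  if X ∈ SSM' P then
    Real.exp (∑ p ∈ (softPart P).filter (fun p => p.formula.sat X), p.weight.val 0)
  else 0

/-- `P'_Π(X)` (alternative semantics). -/
noncomputable def Pr' [Fintype At] (P : Finset (WFormula At)) (X : Finset At) : ℝ :=
  Wgt' P X / ∑ Y : Finset At, Wgt' P Y

/-- A plingo program: hard formulas, soft integrity constraints (a real weight
    together with the constraint formula), and weak constraints. -/
structure PlingoProgram (At : Type) where
  hard : Finset (Formula At)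
  soft : Finset (ℝ × Formula At)
  weak : Finset (WeakConstraint At)

/-- `OSM(Π)`: optimal stable models of `hard(Π) ∪ weak(Π)`. -/
def OSM (P : PlingoProgram At) : Set (Finset At) :=
  { X | OptStable (↑P.hard) P.weak X }

/-- `W''_Π(X)`. -/
noncomputable def Wgt'' (P : PlingoProgram At) (X : Finset At) : ℝ :=
  if X ∈ OSM P then Real.exp (∑ p ∈ P.soft.filter (fun p => p.2.sat X), p.1) else 0

/-- `P''_Π(X)`. -/
noncomputable def Pr'' [Fintype At] (P : PlingoProgram At) (X : Finset At) : ℝ :=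
  Wgt'' P X / ∑ Y ∈ Finset.univ.filter (fun Y => Y ∈ OSM P), Wgt'' P Y

/-- The translation `τ₂`: hard formulas `{α : F ∨ ¬F : (w : F) ∈ Π}`, soft integrity
    constraints `{w : ¬¬F : (w : F) ∈ soft(Π)}`, and weak constraints
    `{:~ F [−1, 1] : (α : F) ∈ hard(Π)}`. -/
noncomputable def tau2 {At : Type} (P : Finset (WFormula At)) : PlingoProgram At where
  hard := P.image (fun p => (p.formula).or p.formula.neg)
  soft := (softPart P).image (fun p => (p.weight.val 0, p.formula.neg.neg))
  weak := (hardPart P).image (fun p => ⟨p.formula, -1, 1⟩)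


/-!
The choice `F ∨ ¬F` is satisfied by every interpretation `X`, and its reduct relative to `X`
is `F^X ∨ ⊥` when `X ⊨ F` and `⊥ ∨ (⊥ → ⊥)`, a tautology, otherwise. Hence the stable models of the
hard part of `τ₂(Π)` are exactly the `X` that are stable models of `Π_X`, i.e. `SSM(Π)`.
All weak constraints of `τ₂(Π)` sit at level `1` with weight `-1`, so the cost of `X` is
`-|hard(Π)_X|`, and optimality means maximising the number of satisfied hard formulas.
-/

namespace Formula

variable {At : Type}

lemma reduct_eq_bot_of_not_sat {X : Finset At} {F : Formula At} (h : ¬ F.sat X) :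
    F.reduct X = bot := by
  cases F <;> simp only [reduct] <;> first | rfl | rw [if_neg h]

lemma sat_or_neg (X : Finset At) (F : Formula At) : (F.or F.neg).sat X :=
  Classical.em (F.sat X)

lemma sat_reduct_or_neg_iff {X Y : Finset At} (F : Formula At) :
    ((F.or F.neg).reduct X).sat Y ↔ (F.sat X → (F.reduct X).sat Y) := by
  by_cases h : F.sat X
  · simp [reduct, sat, neg, h]
  · simp [reduct, sat, neg, h, reduct_eq_bot_of_not_sat h]

end Formula

section Stable

variable {At : Type}

lemma isStable_congr {X : Finset At} {Γ Δ : Set (Formula At)}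
    (hΓ : SatAll X Γ) (hΔ : SatAll X Δ)
    (hreduct : ∀ Y : Finset At,
      SatAll Y (Formula.reduct X '' Γ) ↔ SatAll Y (Formula.reduct X '' Δ)) :
    IsStable X Γ ↔ IsStable X Δ := by
  simp only [IsStable, hΓ, hΔ, hreduct, true_and]

lemma isStable_image_or_neg_iff (X : Finset At) (Γ : Set (Formula At)) :
    IsStable X ((fun F => F.or F.neg) '' Γ) ↔ IsStable X {F ∈ Γ | F.sat X} := by
  refine isStable_congr ?_ (fun F hF => hF.2) fun Y => ?_
  · simp only [SatAll, Set.forall_mem_image]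
    exact fun F _ => Formula.sat_or_neg X F
  · simp only [SatAll, Set.image_image, Set.forall_mem_image, Set.mem_ofPred_eq, and_imp,
      Formula.sat_reduct_or_neg_iff]

lemma mem_SSM_iff (P : Finset (WFormula At)) (X : Finset At) :
    X ∈ SSM P ↔ IsStable X {F ∈ WFormula.formula '' (P : Set (WFormula At)) | F.sat X} := by
  have hsat : WFormula.formula '' (↑(satPart P X) : Set (WFormula At)) =
      {F ∈ WFormula.formula '' (P : Set (WFormula At)) | F.sat X} := by
    ext F
    simp only [satPart, Finset.coe_filter, Set.mem_image, Set.mem_ofPred_eq, Finset.mem_coe]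
    constructor
    · rintro ⟨p, ⟨hp, hpX⟩, rfl⟩
      exact ⟨⟨p, hp, rfl⟩, hpX⟩
    · rintro ⟨⟨p, hp, rfl⟩, hpX⟩
      exact ⟨p, ⟨hp, hpX⟩, rfl⟩
  rw [SSM, Set.mem_ofPred_eq, hsat]

lemma isStable_tau2_hard_iff (P : Finset (WFormula At)) (X : Finset At) :
    IsStable X ((tau2 P).hard : Set (Formula At)) ↔ X ∈ SSM P := by
  have hhard : ((tau2 P).hard : Set (Formula At)) =
      (fun F => F.or F.neg) '' (WFormula.formula '' (P : Set (WFormula At))) := by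
    simp only [tau2, Finset.coe_image, Set.image_image]
  rw [hhard, isStable_image_or_neg_iff, mem_SSM_iff]

end Stable

section Cost

variable {At : Type}

lemma cost_eq_zero_of_forall_level_ne {Ω : Finset (WeakConstraint At)} {l : ℕ}
    (hΩ : ∀ c ∈ Ω, c.level ≠ l) (X : Finset At) : Cost Ω X l = 0 := by
  rw [Cost, Finset.filter_false_of_mem fun c hc h => hΩ c hc h.1, Finset.sum_empty]

lemma optStable_iff_of_forall_level_eq {Γ : Set (Formula At)} {Ω : Finset (WeakConstraint At)}
    {l₀ : ℕ} (hΩ : ∀ c ∈ Ω, c.level = l₀) (X : Finset At) :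
    OptStable Γ Ω X ↔
      IsStable X Γ ∧ ∀ Y : Finset At, IsStable Y Γ → Cost Ω X l₀ ≤ Cost Ω Y l₀ := by
  have hcost : ∀ l ≠ l₀, ∀ Z : Finset At, Cost Ω Z l = 0 := fun l hl =>
    cost_eq_zero_of_forall_level_ne fun c hc h => hl (h ▸ hΩ c hc)
  refine and_congr_right fun _ => ⟨fun hopt Y hY => ?_, ?_⟩
  · by_contra hlt
    exact hopt ⟨Y, hY, l₀, not_le.mp hlt, fun l' hl' => by
      rw [hcost l' hl'.ne' Y, hcost l' hl'.ne' X]⟩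
  · rintro hmin ⟨Y, hY, l, hlt, -⟩
    by_cases hl : l = l₀
    · subst hl
      exact (hmin Y hY).not_gt hlt
    · rw [hcost l hl Y, hcost l hl X] at hlt
      exact hlt.false

lemma cost_image_of_injOn {ι : Type*} (S : Finset ι) (f : ι → Formula At) (w : ℝ) (l : ℕ)
    (hf : Set.InjOn f S) (X : Finset At) :
    Cost (S.image fun i => (⟨f i, w, l⟩ : WeakConstraint At)) X l =
      (S.filter fun i => (f i).sat X).card * w := by
  have hinj : Set.InjOn (fun i => (⟨f i, w, l⟩ : WeakConstraint At))
      (S.filter fun i => (f i).sat X : Finset ι) := fun i hi j hj h =>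
    hf (Finset.mem_filter.mp hi).1 (Finset.mem_filter.mp hj).1 (congrArg WeakConstraint.formula h)
  rw [Cost, Finset.filter_image]
  simp only [true_and, Finset.sum_image hinj, Finset.sum_const, nsmul_eq_mul]

lemma injOn_formula_hardPart (P : Finset (WFormula At)) :
    Set.InjOn WFormula.formula (hardPart P : Set (WFormula At)) := by
  rintro ⟨wp, Fp⟩ hp ⟨wq, Fq⟩ hq (rfl : Fp = Fq)
  have hwp : wp = Weight.alpha := (Finset.mem_filter.mp hp).2
  have hwq : wq = Weight.alpha := (Finset.mem_filter.mp hq).2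
  rw [hwp, hwq]

lemma cost_tau2_weak_one (P : Finset (WFormula At)) (X : Finset At) :
    Cost (tau2 P).weak X 1 = -((hardPart P).filter fun q => q.formula.sat X).card := by
  change Cost ((hardPart P).image fun p => (⟨p.formula, -1, 1⟩ : WeakConstraint At)) X 1 = _
  rw [cost_image_of_injOn _ _ _ _ (injOn_formula_hardPart P), mul_neg_one]

end Cost

theorem osm_tau2_eq_max_hard_ssm_general {At : Type} (P : Finset (WFormula At)) :
    OSM (tau2 P) = { X | X ∈ SSM P ∧ ∀ Y ∈ SSM P,
      ((hardPart P).filter (fun q => q.formula.sat Y)).card ≤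
        ((hardPart P).filter (fun q => q.formula.sat X)).card } := by
  have hlevel : ∀ c ∈ (tau2 P).weak, c.level = 1 := by
    simp only [tau2, Finset.mem_image]
    rintro c ⟨p, -, rfl⟩
    rfl
  ext X
  simp only [OSM, Set.mem_ofPred_eq, optStable_iff_of_forall_level_eq hlevel,
    isStable_tau2_hard_iff, cost_tau2_weak_one, neg_le_neg_iff, Nat.cast_le]

/-- `OSM(τ₂(Π))` consists exactly of the soft stable models of `Π`
    satisfying a maximal number of hard formulas of `Π`. -/
theorem osm_tau2_eq_max_hard_ssm {At : Type} [Fintype At] (P : Finset (WFormula At)) :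
    OSM (tau2 P) = { X | X ∈ SSM P ∧ ∀ Y ∈ SSM P,
      ((hardPart P).filter (fun q => q.formula.sat Y)).card ≤
        ((hardPart P).filter (fun q => q.formula.sat X)).card } :=
  osm_tau2_eq_max_hard_ssm_general P
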